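/- arXiv:1906.06179 — 2 statements merged into one kernel-verified Lean document; each statement's English description precedes it below -/
import Mathlib

section
/- Let f ∈ ℝ[X₁,…,X_n] and let f̃ be its associated PN-polynomial. Then f̃ is SONC if and only if f is SONC. -/
open MvPolynomial Finset

/-- A lattice point is even if all its coordinates are even. -/
def IsEvenPt {n : ℕ} (α : Fin n →₀ ℕ) : Prop := ∀ i, Even (α i)

/-- Embedding of lattice points into `ℝⁿ`. -/
noncomputable def toR {n : ℕ} (α : Fin n →₀ ℕ) : Fin n → ℝ := fun i => (α i : ℝ)

/-- A trellis: a nonempty finite set of even lattice points that are affinely independent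
(the vertices of a simplex). -/
def IsTrellis {n : ℕ} (A : Finset (Fin n →₀ ℕ)) : Prop :=
  A.Nonempty ∧ (∀ α ∈ A, IsEvenPt α) ∧
    AffineIndependent ℝ (fun α : A => toR (α : Fin n →₀ ℕ))

/-- A circuit polynomial. -/
def IsCircuitPoly {n : ℕ} (f : MvPolynomial (Fin n) ℝ) : Prop :=
  ∃ (A : Finset (Fin n →₀ ℕ)) (c : (Fin n →₀ ℕ) → ℝ) (β : Fin n →₀ ℕ) (d : ℝ),
    IsTrellis A ∧ (∀ α ∈ A, 0 < c α) ∧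
    toR β ∈ intrinsicInterior ℝ (convexHull ℝ (toR '' (A : Set (Fin n →₀ ℕ)))) ∧
    f = (∑ α ∈ A, monomial α (c α)) - monomial β d

/-- A monomial square. -/
def IsMonomialSquare {n : ℕ} (f : MvPolynomial (Fin n) ℝ) : Prop :=
  ∃ (c : ℝ) (α : Fin n →₀ ℕ), 0 < c ∧ IsEvenPt α ∧ f = monomial α c

/-- A SONC polynomial: a finite sum of nonnegative circuit polynomials and monomial squares. -/
def IsSONC {n : ℕ} (f : MvPolynomial (Fin n) ℝ) : Prop :=
  ∃ (k : ℕ) (g : Fin k → MvPolynomial (Fin n) ℝ),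
    (∀ i, (IsCircuitPoly (g i) ∧ ∀ x : Fin n → ℝ, 0 ≤ eval x (g i)) ∨ IsMonomialSquare (g i)) ∧
    f = ∑ i, g i

/-- Substitution `f(X^r)`: replace each variable `Xᵢ` by `Xᵢ^r`. -/
noncomputable def substPow {n : ℕ} (r : ℕ) (f : MvPolynomial (Fin n) ℝ) :
    MvPolynomial (Fin n) ℝ :=
  aeval (fun i => (X i : MvPolynomial (Fin n) ℝ) ^ r) f

/-- A PN-polynomial: every monomial whose exponent is not even has a negative coefficient. -/
def IsPN {n : ℕ} (f : MvPolynomial (Fin n) ℝ) : Prop :=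
  ∀ α ∈ f.support, ¬ IsEvenPt α → f.coeff α < 0

open Classical in
/-- The PN-polynomial associated to `f`: replace the coefficient `c` of every monomial with
non-even exponent by `-|c|`. -/
noncomputable def pnAssoc {n : ℕ} (f : MvPolynomial (Fin n) ℝ) : MvPolynomial (Fin n) ℝ :=
  ∑ α ∈ f.support, monomial α (if IsEvenPt α then f.coeff α else -|f.coeff α|)

/-! ### Auxiliary material for the proof -/

open Classical in
/-- Coefficient-wise sign flip of a polynomial. -/
noncomputable def flipC {n : ℕ} (s : (Fin n →₀ ℕ) → ℝ) (g : MvPolynomial (Fin n) ℝ) :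
    MvPolynomial (Fin n) ℝ :=
  ∑ α ∈ g.support, monomial α (s α * g.coeff α)

lemma coeff_flipC {n : ℕ} (s : (Fin n →₀ ℕ) → ℝ) (g : MvPolynomial (Fin n) ℝ)
    (γ : Fin n →₀ ℕ) : coeff γ (flipC s g) = s γ * coeff γ g := by
  classical
  rw [flipC, coeff_sum]
  simp only [coeff_monomial]
  rw [Finset.sum_ite_eq' g.support γ (fun α => s α * coeff α g)]
  by_cases h : γ ∈ g.support
  · simp [h]
  · simp [h, MvPolynomial.notMem_support_iff.mp h]

lemma eval_monomial_univ {n : ℕ} (x : Fin n → ℝ) (α : Fin n →₀ ℕ) (c : ℝ) :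
    eval x (monomial α c) = c * ∏ i, x i ^ α i := by
  rw [eval_monomial, Finsupp.prod_fintype]
  intro i; exact pow_zero _

lemma prod_sign_even {n : ℕ} (z : Fin n → ℝ) (hz : ∀ i, z i = 1 ∨ z i = -1)
    {α : Fin n →₀ ℕ} (hα : IsEvenPt α) (x : Fin n → ℝ) :
    ∏ i, (z i * x i) ^ α i = ∏ i, x i ^ α i := by
  have : ∀ i : Fin n, (z i * x i) ^ α i = x i ^ α i := by
    intro i
    rw [mul_pow]
    rcases hz i with h | h
    · rw [h, one_pow, one_mul]
    · rw [h, (hα i).neg_one_pow, one_mul]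
  exact Finset.prod_congr rfl fun i _ => this i

lemma prod_sign_odd {n : ℕ} {j : Fin n} {β : Fin n →₀ ℕ} (hβ : Odd (β j)) (x : Fin n → ℝ) :
    ∏ i, ((if i = j then (-1 : ℝ) else 1) * x i) ^ β i = -∏ i, x i ^ β i := by
  have h1 : ∀ i : Fin n, ((if i = j then (-1:ℝ) else 1) * x i) ^ β i
      = (if i = j then (-1:ℝ) else 1) ^ β i * x i ^ β i := fun i => mul_pow _ _ _
  rw [Finset.prod_congr rfl fun i _ => h1 i, Finset.prod_mul_distrib]
  have h2 : (∏ i, (if i = j then (-1:ℝ) else 1) ^ β i) = -1 := by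
    rw [Fintype.prod_eq_single j (fun i hi => by simp [hi])]
    simp [hβ.neg_one_pow]
  rw [h2, neg_one_mul]

/-- Flipping the sign of the inner coefficient of a nonnegative circuit polynomial at a
non-even exponent yields a nonnegative circuit polynomial. -/
lemma circuit_flip {n : ℕ} (s : (Fin n →₀ ℕ) → ℝ)
    (hs : ∀ α, s α = 1 ∨ s α = -1) (hse : ∀ α, IsEvenPt α → s α = 1)
    (g : MvPolynomial (Fin n) ℝ) (hg : IsCircuitPoly g) (hpos : ∀ x, 0 ≤ eval x g) :
    IsCircuitPoly (flipC s g) ∧ ∀ x, 0 ≤ eval x (flipC s g) := by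
  classical
  obtain ⟨A, c, β, d, hT, hc, hβ, hfeq⟩ := hg
  have key : flipC s g = (∑ α ∈ A, monomial α (c α)) - monomial β (s β * d) := by
    ext γ
    rw [coeff_flipC, hfeq]
    simp only [coeff_sub, coeff_sum, coeff_monomial]
    rw [Finset.sum_ite_eq' A γ c]
    by_cases hA : γ ∈ A
    · have hsγ : s γ = 1 := hse γ (hT.2.1 γ hA)
      by_cases hbγ : β = γ
      · subst hbγ; simp [hA, hsγ]
      · simp [hA, hbγ, hsγ]
    · by_cases hbγ : β = γ
      · subst hbγ; simp [hA]
      · simp [hA, hbγ]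
  constructor
  · exact ⟨A, c, β, s β * d, hT, hc, hβ, key⟩
  · rcases hs β with h1 | h1
    · have : flipC s g = g := by rw [key, h1, one_mul, hfeq]
      rw [this]; exact hpos
    · have hne : ¬ IsEvenPt β := fun h => by
        rw [hse β h] at h1; norm_num at h1
      obtain ⟨j, hj⟩ : ∃ j, ¬ Even (β j) := by
        by_contra h; push_neg at h; exact hne h
      replace hj : Odd (β j) := Nat.odd_iff.mpr (Nat.not_even_iff.mp hj)
      set z : Fin n → ℝ := fun i => if i = j then (-1:ℝ) else 1 with hz
      have hz1 : ∀ i, z i = 1 ∨ z i = -1 := by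
        intro i; by_cases h : i = j <;> simp [hz, h]
      intro x
      have hev : eval x (flipC s g) = eval (fun i => z i * x i) g := by
        rw [key, hfeq]
        rw [map_sub, map_sub, map_sum, map_sum]
        have hA : ∀ α ∈ A, eval x (monomial α (c α))
            = eval (fun i => z i * x i) (monomial α (c α)) := by
          intro α hα
          rw [eval_monomial_univ, eval_monomial_univ,
            prod_sign_even z hz1 (hT.2.1 α hα)]
        rw [Finset.sum_congr rfl hA]
        congr 1
        rw [eval_monomial_univ, eval_monomial_univ, h1]
        have := prod_sign_odd hj x
        simp only [hz]
        rw [this]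
        ring
      rw [hev]; exact hpos _

lemma flipC_of_monomialSquare {n : ℕ} (s : (Fin n →₀ ℕ) → ℝ)
    (hse : ∀ α, IsEvenPt α → s α = 1) (g : MvPolynomial (Fin n) ℝ)
    (hg : IsMonomialSquare g) : flipC s g = g := by
  classical
  obtain ⟨c, α, hc, hα, rfl⟩ := hg
  ext γ
  rw [coeff_flipC, coeff_monomial]
  by_cases h : α = γ
  · subst h; simp [hse α hα]
  · simp [h]

lemma flipC_sum {n k : ℕ} (s : (Fin n →₀ ℕ) → ℝ) (g : Fin k → MvPolynomial (Fin n) ℝ) :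
    flipC s (∑ i, g i) = ∑ i, flipC s (g i) := by
  ext γ
  rw [coeff_flipC, MvPolynomial.coeff_sum, MvPolynomial.coeff_sum, Finset.mul_sum]
  exact Finset.sum_congr rfl fun i _ => (coeff_flipC s (g i) γ).symm

/-- A coefficient-wise sign flip (fixing even exponents) preserves SONC. -/
lemma isSONC_flipC {n : ℕ} (s : (Fin n →₀ ℕ) → ℝ)
    (hs : ∀ α, s α = 1 ∨ s α = -1) (hse : ∀ α, IsEvenPt α → s α = 1)
    (g : MvPolynomial (Fin n) ℝ) (hg : IsSONC g) : IsSONC (flipC s g) := by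
  obtain ⟨k, p, hp, rfl⟩ := hg
  refine ⟨k, fun i => flipC s (p i), fun i => ?_, flipC_sum s p⟩
  simp only []
  rcases hp i with ⟨h1, h2⟩ | h
  · exact Or.inl (circuit_flip s hs hse (p i) h1 h2)
  · rw [flipC_of_monomialSquare s hse (p i) h]
    exact Or.inr h

open Classical in
noncomputable def pnSign {n : ℕ} (f : MvPolynomial (Fin n) ℝ) : (Fin n →₀ ℕ) → ℝ :=
  fun γ => if IsEvenPt γ then 1 else if 0 < coeff γ f then -1 else 1

lemma pnSign_pm {n : ℕ} (f : MvPolynomial (Fin n) ℝ) (γ : Fin n →₀ ℕ) :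
    pnSign f γ = 1 ∨ pnSign f γ = -1 := by
  classical
  unfold pnSign
  by_cases h1 : IsEvenPt γ
  · simp [h1]
  · by_cases h2 : 0 < coeff γ f <;> simp [h1, h2]

lemma pnSign_even {n : ℕ} (f : MvPolynomial (Fin n) ℝ) (γ : Fin n →₀ ℕ)
    (h : IsEvenPt γ) : pnSign f γ = 1 := by
  classical
  simp [pnSign, h]

open Classical in
lemma coeff_pnAssoc {n : ℕ} (f : MvPolynomial (Fin n) ℝ) (γ : Fin n →₀ ℕ) :
    coeff γ (pnAssoc f) = if IsEvenPt γ then coeff γ f else -|coeff γ f| := by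
  classical
  rw [pnAssoc, coeff_sum]
  simp only [coeff_monomial]
  rw [Finset.sum_ite_eq' f.support γ
    (fun α => if IsEvenPt α then f.coeff α else -|f.coeff α|)]
  by_cases h : γ ∈ f.support
  · simp [h]
  · have h0 : coeff γ f = 0 := MvPolynomial.notMem_support_iff.mp h
    simp [h, h0]

lemma flipC_pnSign_self {n : ℕ} (f : MvPolynomial (Fin n) ℝ) :
    flipC (pnSign f) f = pnAssoc f := by
  classical
  ext γ
  rw [coeff_flipC, coeff_pnAssoc]
  unfold pnSign
  by_cases h1 : IsEvenPt γ
  · simp [h1]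
  · by_cases h2 : 0 < coeff γ f
    · simp [h1, h2, abs_of_pos h2]
    · push_neg at h2
      simp [h1, not_lt.mpr h2, abs_of_nonpos h2]

lemma flipC_pnSign_pnAssoc {n : ℕ} (f : MvPolynomial (Fin n) ℝ) :
    flipC (pnSign f) (pnAssoc f) = f := by
  classical
  ext γ
  rw [coeff_flipC, coeff_pnAssoc]
  unfold pnSign
  by_cases h1 : IsEvenPt γ
  · simp [h1]
  · by_cases h2 : 0 < coeff γ f
    · simp [h1, h2, abs_of_pos h2]
    · push_neg at h2
      simp [h1, not_lt.mpr h2, abs_of_nonpos h2]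

/-- Let `f̃` be the PN-polynomial associated to `f`.
Then `f̃` is SONC if and only if `f` is SONC. -/
theorem isSONC_pnAssoc_iff {n : ℕ} (f : MvPolynomial (Fin n) ℝ) :
    IsSONC (pnAssoc f) ↔ IsSONC f := by
  constructor
  · intro h
    have := isSONC_flipC (pnSign f) (pnSign_pm f) (pnSign_even f) (pnAssoc f) h
    rwa [flipC_pnSign_pnAssoc f] at this
  · intro h
    have := isSONC_flipC (pnSign f) (pnSign_pm f) (pnSign_even f) f h
    rwa [flipC_pnSign_self f] at this
end

section
/- Let f = Σ_{α∈A} c_α X^α − d X^β ∈ ℝ[X₁,…,X_n] be a circuit polynomial and let r be an odd positive integer. Then f(X^r) = Σ_{α∈A} c_α X^{rα} − d X^{rβ} is again a circuit polynomial (supported on the trellis rA with interior point rβ), and f is a nonnegative circuit polynomial if and only if f(X^r) is a nonnegative circuit polynomial. -/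
open MvPolynomial Finset

open Pointwise

open Set in
lemma image_intrinsicInterior_affineEquiv {V W : Type*} [NormedAddCommGroup V] [NormedSpace ℝ V]
    [NormedAddCommGroup W] [NormedSpace ℝ W] (φ : V ≃ᵃ[ℝ] W) (hc : Continuous φ)
    (hc' : Continuous φ.symm) (s : Set V) :
    intrinsicInterior ℝ (φ '' s) = φ '' intrinsicInterior ℝ s := by
  have hspan : (affineSpan ℝ (⇑φ '' s) : Set W) = ⇑φ '' (affineSpan ℝ s : Set V) := by
    rw [show (⇑φ '' s) = ⇑φ.toAffineMap '' s from rfl, ← AffineSubspace.map_span,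
      AffineSubspace.coe_map]
    rfl
  let e : V ≃ₜ W := ⟨φ.toEquiv, hc, hc'⟩
  have hspan' : ⇑e '' (affineSpan ℝ s : Set V) = (affineSpan ℝ (⇑φ '' s) : Set W) := by
    rw [hspan]; rfl
  let G : (affineSpan ℝ s : Set V) ≃ₜ (affineSpan ℝ (⇑φ '' s) : Set W) :=
    (e.image (affineSpan ℝ s : Set V)).trans (Homeomorph.setCongr hspan')
  have hpre : ((↑) ⁻¹' s : Set (affineSpan ℝ s)) =
      ⇑G ⁻¹' (((↑) ⁻¹' (⇑φ '' s)) : Set (affineSpan ℝ (⇑φ '' s))) := by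
    ext y
    simp only [Set.mem_preimage]
    constructor
    · intro h; exact mem_image_of_mem _ h
    · rintro ⟨z, hz, hzy⟩
      have : z = (y : V) := φ.injective hzy
      rwa [← this]
  rw [intrinsicInterior, intrinsicInterior, hpre]
  erw [show interior (⇑G ⁻¹' ((↑) ⁻¹' (⇑φ '' s))) = ⇑G ⁻¹' interior ((↑) ⁻¹' (⇑φ '' s)) from
    (G.preimage_interior _).symm]
  rw [← image_comp]
  have hcomp : (⇑φ ∘ (↑) : (affineSpan ℝ s : Set V) → W) = (↑) ∘ ⇑G := rfl
  erw [hcomp]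
  rw [Set.image_comp, G.image_preimage]
  rfl

lemma intrinsicInterior_smul_pos {V : Type*} [NormedAddCommGroup V] [NormedSpace ℝ V]
    (t : ℝ) (ht : 0 < t) (s : Set V) :
    intrinsicInterior ℝ (t • s) = t • intrinsicInterior ℝ s := by
  let φ : V ≃ᵃ[ℝ] V := (LinearEquiv.smulOfNeZero ℝ V t ht.ne').toAffineEquiv
  have hφ : ⇑φ = fun x : V => t • x := rfl
  have h1 : t • s = ⇑φ '' s := by rw [hφ, Set.image_smul]
  have h2 : Continuous ⇑φ := by rw [hφ]; exact continuous_const_smul t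
  have h3 : Continuous ⇑φ.symm := by
    have : ⇑φ.symm = fun x : V => t⁻¹ • x := rfl
    rw [this]; exact continuous_const_smul _
  rw [h1, image_intrinsicInterior_affineEquiv φ h2 h3, hφ, Set.image_smul]

lemma toR_smul {n : ℕ} (r : ℕ) (γ : Fin n →₀ ℕ) : toR (r • γ) = (r : ℝ) • toR γ := by
  funext i
  simp [toR, Finsupp.smul_apply]

lemma aeval_pow_monomial {n : ℕ} (r : ℕ) (hr : 0 < r) (γ : Fin n →₀ ℕ) (a : ℝ) :
    aeval (fun i => (X i : MvPolynomial (Fin n) ℝ) ^ r) (monomial γ a) = monomial (r • γ) a := by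
  rw [aeval_monomial, monomial_eq, algebraMap_eq]
  congr 1
  rw [Finsupp.prod, Finsupp.prod, Finsupp.support_smul_eq hr.ne']
  refine Finset.prod_congr rfl fun i _ => ?_
  rw [Finsupp.smul_apply, smul_eq_mul, pow_mul]

lemma eval_monomial_smul {n : ℕ} (r : ℕ) (hr : 0 < r) (γ : Fin n →₀ ℕ) (a : ℝ)
    (x : Fin n → ℝ) :
    eval x (monomial (r • γ) a) = eval (fun i => x i ^ r) (monomial γ a) := by
  rw [eval_monomial, eval_monomial]
  congr 1
  rw [Finsupp.prod, Finsupp.prod, Finsupp.support_smul_eq hr.ne']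
  refine Finset.prod_congr rfl fun i _ => ?_
  rw [Finsupp.smul_apply, smul_eq_mul, pow_mul]

/-- Let `f = Σ_{α∈A} c_α X^α − d X^β` be a circuit polynomial and let `r` be
an odd positive integer. Then `f(X^r) = Σ_{α∈A} c_α X^{rα} − d X^{rβ}` is again a circuit
polynomial, supported on the trellis `rA` with interior point `rβ`, and `f` is a nonnegative
circuit polynomial if and only if `f(X^r)` is a nonnegative circuit polynomial. -/
theorem circuit_substPow_odd {n : ℕ} (A : Finset (Fin n →₀ ℕ)) (c : (Fin n →₀ ℕ) → ℝ)
    (β : Fin n →₀ ℕ) (d : ℝ)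
    (hA : IsTrellis A) (hc : ∀ α ∈ A, 0 < c α)
    (hβ : toR β ∈ intrinsicInterior ℝ (convexHull ℝ (toR '' (A : Set (Fin n →₀ ℕ)))))
    (r : ℕ) (hr : 0 < r) (hodd : Odd r)
    (f : MvPolynomial (Fin n) ℝ)
    (hf : f = (∑ α ∈ A, monomial α (c α)) - monomial β d) :
    substPow r f = (∑ α ∈ A, monomial (r • α) (c α)) - monomial (r • β) d ∧
    IsTrellis (A.image (fun α => r • α)) ∧
    toR (r • β) ∈ intrinsicInterior ℝ
      (convexHull ℝ (toR '' ((A.image (fun α => r • α)) : Set (Fin n →₀ ℕ)))) ∧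
    ((∀ x : Fin n → ℝ, 0 ≤ eval x f) ↔ ∀ x : Fin n → ℝ, 0 ≤ eval x (substPow r f)) := by
  have conj1 : substPow r f = (∑ α ∈ A, monomial (r • α) (c α)) - monomial (r • β) d := by
    rw [hf, substPow, map_sub, map_sum]
    simp only [aeval_pow_monomial r hr]
  have hinj : Function.Injective (fun α : Fin n →₀ ℕ => r • α) := by
    intro a b h
    ext i
    have := DFunLike.congr_fun h i
    simp only [Finsupp.smul_apply, smul_eq_mul] at this
    exact Nat.eq_of_mul_eq_mul_left hr this
  have himg : toR '' ((A.image fun α => r • α : Finset (Fin n →₀ ℕ)) : Set (Fin n →₀ ℕ))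
      = (r : ℝ) • (toR '' (A : Set (Fin n →₀ ℕ))) := by
    rw [Finset.coe_image, ← Set.image_comp]
    have : toR ∘ (fun α : Fin n →₀ ℕ => r • α) = (fun v => (r : ℝ) • v) ∘ toR := by
      funext γ; exact toR_smul r γ
    rw [this, Set.image_comp, Set.image_smul]
  have hrR : (0 : ℝ) < (r : ℝ) := by exact_mod_cast hr
  refine ⟨conj1, ⟨hA.1.image _, ?_, ?_⟩, ?_, ?_⟩
  · -- even points
    intro α' hα'
    obtain ⟨α, hα, rfl⟩ := Finset.mem_image.1 hα'
    intro i
    rw [Finsupp.smul_apply, smul_eq_mul]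
    exact (hA.2.1 α hα i).mul_left r
  · -- affine independence
    let e : {x // x ∈ A} ≃ {y // y ∈ A.image (fun α => r • α)} := by
      refine Equiv.ofBijective (fun a => ⟨r • (a : Fin n →₀ ℕ), Finset.mem_image_of_mem _ a.2⟩)
        ⟨fun a b h => ?_, fun y => ?_⟩
      · exact Subtype.ext (hinj (congrArg Subtype.val h))
      · obtain ⟨a, ha, hay⟩ := Finset.mem_image.1 y.2
        exact ⟨⟨a, ha⟩, Subtype.ext hay⟩
    rw [← affineIndependent_equiv e]
    have hL : AffineIndependent ℝ
        ((fun v => (r : ℝ) • v) ∘ fun α : A => toR (α : Fin n →₀ ℕ)) := by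
      refine hA.2.2.map' ((LinearEquiv.smulOfNeZero ℝ (Fin n → ℝ) (r : ℝ)
        hrR.ne').toAffineEquiv : (Fin n → ℝ) ≃ᵃ[ℝ] (Fin n → ℝ)).toAffineMap ?_
      exact (LinearEquiv.smulOfNeZero ℝ (Fin n → ℝ) (r : ℝ) hrR.ne').toAffineEquiv.injective
    convert hL using 1
    funext a
    exact toR_smul r (a : Fin n →₀ ℕ)
  · -- intrinsic interior
    rw [himg, convexHull_smul, intrinsicInterior_smul_pos _ hrR, toR_smul]
    exact Set.smul_mem_smul_set hβ
  · -- evaluation iff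
    have heval : ∀ x : Fin n → ℝ, eval x (substPow r f) = eval (fun i => x i ^ r) f := by
      intro x
      rw [conj1, hf, map_sub, map_sub, map_sum, map_sum, eval_monomial_smul r hr]
      congr 1
      exact Finset.sum_congr rfl fun α _ => eval_monomial_smul r hr α (c α) x
    constructor
    · intro h x
      rw [heval x]
      exact h _
    · intro h x
      set y : Fin n → ℝ := fun i =>
        if 0 ≤ x i then (x i) ^ ((r : ℝ)⁻¹) else -((-(x i)) ^ ((r : ℝ)⁻¹)) with hy
      have hyr : ∀ i, y i ^ r = x i := by
        intro i
        by_cases hxi : 0 ≤ x i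
        · simp only [hy, hxi, if_true]
          exact Real.rpow_inv_natCast_pow hxi hr.ne'
        · simp only [hy, hxi, if_false]
          rw [hodd.neg_pow, Real.rpow_inv_natCast_pow (by linarith [lt_of_not_ge hxi]) hr.ne',
            neg_neg]
      have : x = fun i => y i ^ r := funext fun i => (hyr i).symm
      rw [this]
      rw [← heval y]
      exact h y
end
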